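/- Let X ∈ 𝓧 and Y ∈ 𝓨 be finite random variables with joint pmf p_{XY}, let ℓ be a natural number, and let F : 𝓧 → {1,…,2^ℓ} be a uniformly random function (each F(x) chosen independently and uniformly). Then the expected total variation distance E_F[ ‖p_{F(X),Y} − p^U × p_Y‖_TV ] ≤ (1/2)·2^{−(H₂(p_{XY}|Y) − ℓ)/2}, where p^U is uniform on {1,…,2^ℓ}. In particular, there exists a deterministic f : 𝓧 → {1,…,2^ℓ} with ‖p_{f(X),Y} − p^U × p_Y‖_TV ≤ (1/2)·2^{−(H₂(p_{XY}|Y) − ℓ)/2}. -/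

import Mathlib

open Finset

/-- `p` is a probability mass function on the finite type `α`. -/
def IsPmf {α : Type*} [Fintype α] (p : α → ℝ) : Prop :=
  (∀ a, 0 ≤ p a) ∧ ∑ a, p a = 1

/-- The conditional collision entropy `H₂(p_{XY}|Y) = max_{q_Y} H₂(p_{XY}|q_Y)`
where `H₂(p_{XY}|q_Y) = −log₂ ∑_{x,y} p(x,y)²/q(y)` (the maximum is taken over
pmfs `q` whose support contains the `Y`-support of `p`, which does not change
the value since other `q` give `−∞`). -/
noncomputable def condCollisionEntropy {X Y : Type*} [Fintype X] [Fintype Y]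
    (p : X × Y → ℝ) : ℝ :=
  sSup {h | ∃ q : Y → ℝ, IsPmf q ∧ (∀ y, q y = 0 → ∀ x, p (x, y) = 0) ∧
    h = -Real.logb 2 (∑ xy : X × Y, p xy ^ 2 / q xy.2)}

/-- Total variation distance between the joint distribution of `(f(X), Y)` and
the product of the uniform distribution on `Fin (2^ℓ)` with the marginal of
`Y`. -/
noncomputable def hashTV {X Y : Type*} [Fintype X] [Fintype Y]
    (p : X × Y → ℝ) (ℓ : ℕ) (f : X → Fin (2 ^ ℓ)) : ℝ :=
  (1/2) * ∑ by_ : Fin (2 ^ ℓ) × Y,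
    |(∑ x, if f x = by_.1 then p (x, by_.2) else 0)
      - ((2 ^ ℓ : ℝ))⁻¹ * ∑ x, p (x, by_.2)|

section Aux

lemma count_pair {X B : Type*} [Fintype X] [Fintype B] [DecidableEq X] [DecidableEq B]
    (x x' : X) (h : x ≠ x') :
    (∑ f : X → B, (if f x = f x' then (1:ℝ) else 0)) * (Fintype.card B : ℝ)
      = (Fintype.card (X → B) : ℝ) := by
  have key : (∑ f : X → B, (if f x = f x' then (1:ℝ) else 0))
      = ∑ ab : B × ({ j // j ≠ x } → B), (if ab.1 = ab.2 ⟨x', h.symm⟩ then (1:ℝ) else 0) := by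
    refine Fintype.sum_equiv (Equiv.funSplitAt x B) _ _ (fun f => ?_)
    simp [Equiv.funSplitAt, Equiv.piSplitAt_apply]
  rw [key, Fintype.sum_prod_type, Finset.sum_comm]
  simp [Fintype.card_congr (Equiv.funSplitAt x B), mul_comm]

lemma sum_eb {B : Type*} [Fintype B] [DecidableEq B] [Nonempty B] (a a' : B) :
    ∑ b : B, ((if a = b then (1:ℝ) else 0) - (Fintype.card B : ℝ)⁻¹)
      * ((if a' = b then (1:ℝ) else 0) - (Fintype.card B : ℝ)⁻¹)
    = (if a = a' then (1:ℝ) else 0) - (Fintype.card B : ℝ)⁻¹ := by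
  have hc : (Fintype.card B : ℝ) ≠ 0 := by exact_mod_cast Fintype.card_ne_zero
  set u : ℝ := (Fintype.card B : ℝ)⁻¹ with hu
  have h1 : ∑ b : B, (if a = b then (1:ℝ) else 0) * (if a' = b then (1:ℝ) else 0)
      = if a = a' then 1 else 0 := by simp [ite_and, eq_comm]
  have h2 : ∑ b : B, (if a = b then (1:ℝ) else 0) = 1 := by simp
  have h3 : ∑ b : B, (if a' = b then (1:ℝ) else 0) = 1 := by simp
  have expand : ∀ b : B, ((if a = b then (1:ℝ) else 0) - u) * ((if a' = b then (1:ℝ) else 0) - u)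
      = (if a = b then (1:ℝ) else 0) * (if a' = b then (1:ℝ) else 0)
        - u * (if a = b then (1:ℝ) else 0) - u * (if a' = b then (1:ℝ) else 0) + u * u := by
    intro b; ring
  rw [Finset.sum_congr rfl (fun b _ => expand b)]
  rw [Finset.sum_add_distrib, Finset.sum_sub_distrib, Finset.sum_sub_distrib,
    ← Finset.mul_sum, ← Finset.mul_sum, h1, h2, h3, Finset.sum_const]
  simp only [Finset.card_univ, nsmul_eq_mul]
  have : (Fintype.card B : ℝ) * (u * u) = u := by rw [← mul_assoc, hu, mul_inv_cancel₀ hc, one_mul]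
  rw [this]; ring

lemma exp_var {X B : Type*} [Fintype X] [Fintype B] [DecidableEq X] [DecidableEq B]
    [Nonempty B] (py : X → ℝ) :
    ∑ f : X → B, ((Fintype.card B : ℝ) ^ Fintype.card X)⁻¹ *
      (∑ b : B, (∑ x, ((if f x = b then (1:ℝ) else 0) - (Fintype.card B : ℝ)⁻¹) * py x)^2)
    = (1 - (Fintype.card B : ℝ)⁻¹) * ∑ x, (py x)^2 := by
  have hm : (Fintype.card B : ℝ) ≠ 0 := by exact_mod_cast Fintype.card_ne_zero
  set m : ℝ := (Fintype.card B : ℝ) with hmdef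
  set u : ℝ := m⁻¹ with hu
  set w : ℝ := (m ^ Fintype.card X)⁻¹ with hw
  have hN : (Fintype.card (X → B) : ℝ) = m ^ Fintype.card X := by
    rw [Fintype.card_fun]; push_cast; ring
  have hNw : (Fintype.card (X → B) : ℝ) * w = 1 := by
    rw [hN, hw]; field_simp
  have stepA : ∀ f : X → B,
      (∑ b : B, (∑ x, ((if f x = b then (1:ℝ) else 0) - u) * py x)^2)
      = ∑ x, ∑ x', py x * py x' * ((if f x = f x' then (1:ℝ) else 0) - u) := by
    intro f
    calc (∑ b : B, (∑ x, ((if f x = b then (1:ℝ) else 0) - u) * py x)^2)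
        = ∑ b : B, ∑ x, ∑ x', (((if f x = b then (1:ℝ) else 0) - u) * py x)
            * (((if f x' = b then (1:ℝ) else 0) - u) * py x') := by
          refine Finset.sum_congr rfl fun b _ => ?_
          rw [pow_two, Finset.sum_mul_sum]
      _ = ∑ x, ∑ x', py x * py x'
            * ∑ b : B, ((if f x = b then (1:ℝ) else 0) - u) * ((if f x' = b then (1:ℝ) else 0) - u) := by
          rw [Finset.sum_comm]
          refine Finset.sum_congr rfl fun x _ => ?_
          rw [Finset.sum_comm]
          refine Finset.sum_congr rfl fun x' _ => ?_
          rw [Finset.mul_sum]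
          exact Finset.sum_congr rfl fun b _ => by ring
      _ = ∑ x, ∑ x', py x * py x' * ((if f x = f x' then (1:ℝ) else 0) - u) := by
          refine Finset.sum_congr rfl fun x _ => Finset.sum_congr rfl fun x' _ => ?_
          rw [sum_eb (f x) (f x')]
  have hE : ∀ x x' : X,
      (∑ f : X → B, w * ((if f x = f x' then (1:ℝ) else 0) - u))
      = if x = x' then 1 - u else 0 := by
    intro x x'
    have : (∑ f : X → B, w * ((if f x = f x' then (1:ℝ) else 0) - u))
        = w * (∑ f : X → B, (if f x = f x' then (1:ℝ) else 0))
          - (Fintype.card (X → B) : ℝ) * w * u := by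
      rw [Finset.mul_sum]
      rw [Finset.sum_congr rfl (fun f _ => mul_sub w _ u), Finset.sum_sub_distrib]
      simp [Finset.sum_const, Finset.card_univ]; ring
    rw [this]
    by_cases hxx : x = x'
    · subst hxx
      simp only [eq_self_iff_true, if_true, ite_true, Finset.sum_const, Finset.card_univ,
        nsmul_eq_mul, mul_one]
      rw [mul_comm w ((Fintype.card (X → B) : ℝ)), hNw, one_mul]
    · rw [if_neg hxx]
      have hcp := count_pair (B := B) x x' hxx
      have hsum : (∑ f : X → B, (if f x = f x' then (1:ℝ) else 0))
          = (Fintype.card (X → B) : ℝ) * u := by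
        rw [hu, hmdef]
        field_simp at hcp ⊢
        linarith [hcp]
      rw [hsum]
      ring
  calc ∑ f : X → B, w * (∑ b : B, (∑ x, ((if f x = b then (1:ℝ) else 0) - u) * py x)^2)
      = ∑ f : X → B, ∑ x, ∑ x', py x * py x' * (w * ((if f x = f x' then (1:ℝ) else 0) - u)) := by
        refine Finset.sum_congr rfl fun f _ => ?_
        rw [stepA f, Finset.mul_sum]
        refine Finset.sum_congr rfl fun x _ => ?_
        rw [Finset.mul_sum]
        exact Finset.sum_congr rfl fun x' _ => by ring
    _ = ∑ x, ∑ x', py x * py x' * (if x = x' then 1 - u else 0) := by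
        rw [Finset.sum_comm]
        refine Finset.sum_congr rfl fun x _ => ?_
        rw [Finset.sum_comm]
        refine Finset.sum_congr rfl fun x' _ => ?_
        rw [← Finset.mul_sum, hE x x']
    _ = (1 - u) * ∑ x, (py x)^2 := by
        rw [Finset.mul_sum]
        refine Finset.sum_congr rfl fun x _ => ?_
        rw [Finset.sum_eq_single x]
        · simp; ring
        · intro x' _ hx'; simp [Ne.symm hx']
        · intro h; exact absurd (Finset.mem_univ x) h

lemma jensen_sqrt {ι : Type*} [Fintype ι] (w t : ι → ℝ) (hw : ∀ i, 0 ≤ w i)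
    (ht : ∀ i, 0 ≤ t i) (hw1 : ∑ i, w i = 1) :
    ∑ i, w i * Real.sqrt (t i) ≤ Real.sqrt (∑ i, w i * t i) := by
  have h := Finset.sum_mul_sq_le_sq_mul_sq Finset.univ
    (fun i => Real.sqrt (w i)) (fun i => Real.sqrt (w i * t i))
  have e1 : ∀ i : ι, Real.sqrt (w i) * Real.sqrt (w i * t i) = w i * Real.sqrt (t i) := by
    intro i; rw [Real.sqrt_mul (hw i), ← mul_assoc, Real.mul_self_sqrt (hw i)]
  rw [Finset.sum_congr rfl (fun i _ => e1 i),
    Finset.sum_congr rfl (fun i _ => Real.sq_sqrt (hw i)),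
    Finset.sum_congr rfl (fun i _ => Real.sq_sqrt (mul_nonneg (hw i) (ht i))), hw1, one_mul] at h
  have hnn : 0 ≤ ∑ i, w i * Real.sqrt (t i) :=
    Finset.sum_nonneg fun i _ => mul_nonneg (hw i) (Real.sqrt_nonneg _)
  calc ∑ i, w i * Real.sqrt (t i) = Real.sqrt ((∑ i, w i * Real.sqrt (t i)) ^ 2) :=
        (Real.sqrt_sq hnn).symm
    _ ≤ Real.sqrt (∑ i, w i * t i) := Real.sqrt_le_sqrt h

lemma l1_le_sqrt_card {B : Type*} [Fintype B] (g : B → ℝ) :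
    ∑ b, |g b| ≤ Real.sqrt (Fintype.card B) * Real.sqrt (∑ b, (g b) ^ 2) := by
  have h := Finset.sum_mul_sq_le_sq_mul_sq Finset.univ (fun b => (1:ℝ)) (fun b => |g b|)
  simp only [one_mul, one_pow, sq_abs, Finset.sum_const, Finset.card_univ, nsmul_eq_mul,
    mul_one] at h
  have hnn : 0 ≤ ∑ b, |g b| := Finset.sum_nonneg fun b _ => abs_nonneg _
  calc ∑ b, |g b| = Real.sqrt ((∑ b, |g b|) ^ 2) := (Real.sqrt_sq hnn).symm
    _ ≤ Real.sqrt ((Fintype.card B : ℝ) * ∑ b, (g b) ^ 2) := Real.sqrt_le_sqrt h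
    _ = Real.sqrt (Fintype.card B) * Real.sqrt (∑ b, (g b) ^ 2) := by
        rw [Real.sqrt_mul (Nat.cast_nonneg _)]

lemma rhs_eq (ℓ : ℕ) (S : ℝ) (hS : 0 < S) :
    (2:ℝ) ^ (-(-Real.logb 2 (S ^ 2) - (ℓ:ℝ)) / 2) = Real.sqrt ((2:ℝ) ^ ℓ) * S := by
  have h1 : -(-Real.logb 2 (S ^ 2) - (ℓ:ℝ)) / 2 = (ℓ:ℝ) / 2 + Real.logb 2 S := by
    rw [Real.logb_pow]; push_cast; ring
  rw [h1, Real.rpow_add (by norm_num), Real.rpow_logb (by norm_num) (by norm_num) hS]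
  congr 1
  rw [Real.sqrt_eq_rpow, ← Real.rpow_natCast (2:ℝ) ℓ, ← Real.rpow_mul (by norm_num)]
  rw [mul_one_div]

lemma S_pos {X Y : Type*} [Fintype X] [Fintype Y] (p : X × Y → ℝ) (hp : IsPmf p) :
    0 < ∑ y, Real.sqrt (∑ x, p (x, y) ^ 2) := by
  obtain ⟨hp0, hp1⟩ := hp
  have hex : ∃ xy : X × Y, p xy ≠ 0 := by
    by_contra hcon
    push_neg at hcon
    rw [Finset.sum_eq_zero (fun xy _ => hcon xy)] at hp1
    norm_num at hp1
  obtain ⟨⟨x0, y0⟩, hx0⟩ := hex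
  have hcy0 : 0 < ∑ x, p (x, y0) ^ 2 := by
    have h1 : 0 < p (x0, y0) ^ 2 := by positivity
    calc (0:ℝ) < p (x0, y0) ^ 2 := h1
      _ ≤ _ := Finset.single_le_sum (fun x _ => sq_nonneg (p (x, y0))) (Finset.mem_univ x0)
  calc (0:ℝ) < Real.sqrt (∑ x, p (x, y0) ^ 2) := Real.sqrt_pos.mpr hcy0
    _ ≤ _ := Finset.single_le_sum (f := fun y => Real.sqrt (∑ x, p (x, y) ^ 2))
      (fun y _ => Real.sqrt_nonneg _) (Finset.mem_univ y0)

lemma entropy_eq {X Y : Type*} [Fintype X] [Fintype Y] [Nonempty X] [Nonempty Y]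
    (p : X × Y → ℝ) (hp : IsPmf p) :
    condCollisionEntropy p
      = - Real.logb 2 ((∑ y, Real.sqrt (∑ x, p (x, y) ^ 2)) ^ 2) := by
  obtain ⟨hp0, hp1⟩ := hp
  set c : Y → ℝ := fun y => ∑ x, p (x, y) ^ 2 with hc
  have hc0 : ∀ y, 0 ≤ c y := fun y => Finset.sum_nonneg fun x _ => sq_nonneg _
  set S : ℝ := ∑ y, Real.sqrt (c y) with hS
  have hS0 : 0 < S := S_pos p ⟨hp0, hp1⟩
  have hsplit : ∀ q : Y → ℝ, (∑ xy : X × Y, p xy ^ 2 / q xy.2) = ∑ y, c y / q y := by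
    intro q
    rw [Fintype.sum_prod_type, Finset.sum_comm]
    exact Finset.sum_congr rfl fun y _ => by rw [Finset.sum_div]
  unfold condCollisionEntropy
  apply IsGreatest.csSup_eq
  constructor
  · refine ⟨fun y => Real.sqrt (c y) / S, ⟨fun y => by positivity, ?_⟩, ?_, ?_⟩
    · rw [← Finset.sum_div, ← hS, div_self (ne_of_gt hS0)]
    · intro y hy x
      have hcy : c y = 0 := by
        have := (div_eq_zero_iff.mp hy).resolve_right (ne_of_gt hS0)
        exact Real.sqrt_eq_zero (hc0 y) |>.mp this
      have := (Finset.sum_eq_zero_iff_of_nonneg (fun x _ => sq_nonneg (p (x, y)))).mp hcy x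
        (Finset.mem_univ x)
      exact pow_eq_zero_iff (n := 2) (by norm_num) |>.mp this
    · congr 1
      simp only [Fintype.sum_prod_type]
      rw [Finset.sum_comm]
      have : ∀ y, (∑ x, p (x, y) ^ 2 / (Real.sqrt (c y) / S)) = S * Real.sqrt (c y) := by
        intro y
        rw [← Finset.sum_div]
        show c y / (Real.sqrt (c y) / S) = S * Real.sqrt (c y)
        rcases eq_or_lt_of_le (hc0 y) with h | h
        · rw [← h]; simp
        · rw [div_div_eq_mul_div, mul_comm, mul_div_assoc, Real.div_sqrt]
      rw [Finset.sum_congr rfl fun y _ => this y, ← Finset.mul_sum, ← hS, pow_two]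
  · rintro h ⟨q, ⟨hq0, hq1⟩, hqsupp, rfl⟩
    rw [hsplit]
    have hub : S ^ 2 ≤ ∑ y, c y / q y := by
      have hrep : ∀ y, Real.sqrt (c y) = Real.sqrt (c y / q y) * Real.sqrt (q y) := by
        intro y
        rcases eq_or_lt_of_le (hq0 y) with h | h
        · have hcy : c y = 0 := Finset.sum_eq_zero fun x _ => by
            rw [hqsupp y h.symm x]; ring
          rw [hcy, ← h]; simp
        · rw [← Real.sqrt_mul (by positivity) (q y), div_mul_cancel₀ _ (ne_of_gt h)]
      calc S ^ 2 = (∑ y, Real.sqrt (c y / q y) * Real.sqrt (q y)) ^ 2 := by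
            rw [hS, Finset.sum_congr rfl fun y _ => hrep y]
        _ ≤ (∑ y, Real.sqrt (c y / q y) ^ 2) * (∑ y, Real.sqrt (q y) ^ 2) :=
            Finset.sum_mul_sq_le_sq_mul_sq _ _ _
        _ = ∑ y, c y / q y := by
            rw [Finset.sum_congr rfl fun y _ => Real.sq_sqrt (div_nonneg (hc0 y) (hq0 y)),
              Finset.sum_congr rfl fun y _ => Real.sq_sqrt (hq0 y), hq1, mul_one]
    have h2 : (0:ℝ) < S ^ 2 := by positivity
    have := Real.logb_le_logb_of_le (b := 2) (by norm_num) h2 hub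
    linarith

end Aux

/-- Theorem 5.5.1 of Renner, leftover hash lemma: for a
uniformly random function `F : 𝓧 → {1,…,2^ℓ}`, the expected total variation
distance between `p_{F(X),Y}` and `p^U × p_Y` is at most
`(1/2)·2^{−(H₂(p_{XY}|Y) − ℓ)/2}`; in particular some deterministic `f`
achieves this bound. -/
theorem leftover_hash_lemma {X Y : Type*} [Fintype X] [Fintype Y]
    [Nonempty X] [Nonempty Y] [DecidableEq X]
    (p : X × Y → ℝ) (hp : IsPmf p) (ℓ : ℕ) :
    (∑ f : X → Fin (2 ^ ℓ), ((2 ^ ℓ : ℝ) ^ Fintype.card X)⁻¹ * hashTV p ℓ f)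
        ≤ (1/2) * (2 : ℝ) ^ (-(condCollisionEntropy p - (ℓ : ℝ)) / 2)
    ∧ ∃ f : X → Fin (2 ^ ℓ),
        hashTV p ℓ f ≤ (1/2) * (2 : ℝ) ^ (-(condCollisionEntropy p - (ℓ : ℝ)) / 2) := by
  obtain ⟨hp0, hp1⟩ := hp
  set c : Y → ℝ := fun y => ∑ x, p (x, y) ^ 2 with hc
  set S : ℝ := ∑ y, Real.sqrt (c y) with hSdef
  have hS0 : 0 < S := S_pos p ⟨hp0, hp1⟩
  set w : ℝ := (((2:ℝ) ^ ℓ) ^ Fintype.card X)⁻¹ with hw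
  have hwpos : 0 < w := by positivity
  have hcardB : (Fintype.card (Fin (2 ^ ℓ)) : ℝ) = (2:ℝ) ^ ℓ := by
    rw [Fintype.card_fin]; push_cast; ring
  have hw1 : ∑ _f : X → Fin (2 ^ ℓ), w = 1 := by
    rw [Finset.sum_const, Finset.card_univ, Fintype.card_fun, Fintype.card_fin, nsmul_eq_mul, hw]
    push_cast
    exact mul_inv_cancel₀ (by positivity)
  have hRHS : (1/2) * (2:ℝ) ^ (-(condCollisionEntropy p - (ℓ:ℝ)) / 2)
      = (1/2) * (Real.sqrt ((2:ℝ) ^ ℓ) * S) := by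
    rw [entropy_eq p ⟨hp0, hp1⟩, rhs_eq ℓ S hS0]
  -- the per-y key bound
  have key : ∀ y : Y, (∑ f : X → Fin (2 ^ ℓ), w * ∑ b : Fin (2 ^ ℓ),
      |(∑ x, if f x = b then p (x, y) else 0) - ((2:ℝ) ^ ℓ)⁻¹ * ∑ x, p (x, y)|)
      ≤ Real.sqrt ((2:ℝ) ^ ℓ) * Real.sqrt (c y) := by
    intro y
    have hΔ : ∀ (f : X → Fin (2 ^ ℓ)) (b : Fin (2 ^ ℓ)),
        (∑ x, if f x = b then p (x, y) else 0) - ((2:ℝ) ^ ℓ)⁻¹ * ∑ x, p (x, y)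
        = ∑ x, ((if f x = b then (1:ℝ) else 0) - ((2:ℝ) ^ ℓ)⁻¹) * p (x, y) := by
      intro f b
      simp only [sub_mul, ite_mul, one_mul, zero_mul, Finset.sum_sub_distrib, Finset.mul_sum]
    set t : (X → Fin (2 ^ ℓ)) → ℝ :=
      fun f => ∑ b : Fin (2 ^ ℓ),
        (∑ x, ((if f x = b then (1:ℝ) else 0) - ((2:ℝ) ^ ℓ)⁻¹) * p (x, y)) ^ 2 with ht
    have ht0 : ∀ f, 0 ≤ t f := fun f => Finset.sum_nonneg fun b _ => sq_nonneg _
    have hexp : ∑ f : X → Fin (2 ^ ℓ), w * t f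
        = (1 - ((2:ℝ) ^ ℓ)⁻¹) * ∑ x, p (x, y) ^ 2 := by
      have h := exp_var (B := Fin (2 ^ ℓ)) (fun x => p (x, y))
      rw [hcardB] at h
      exact h
    have step1 : ∀ f : X → Fin (2 ^ ℓ),
        (∑ b : Fin (2 ^ ℓ), |∑ x, ((if f x = b then (1:ℝ) else 0) - ((2:ℝ) ^ ℓ)⁻¹) * p (x, y)|)
        ≤ Real.sqrt ((2:ℝ) ^ ℓ) * Real.sqrt (t f) := by
      intro f
      have h := l1_le_sqrt_card
        (fun b : Fin (2 ^ ℓ) => ∑ x, ((if f x = b then (1:ℝ) else 0) - ((2:ℝ) ^ ℓ)⁻¹) * p (x, y))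
      rwa [hcardB] at h
    have stepJ : ∑ f : X → Fin (2 ^ ℓ), w * Real.sqrt (t f)
        ≤ Real.sqrt (∑ f : X → Fin (2 ^ ℓ), w * t f) :=
      jensen_sqrt _ _ (fun _ => le_of_lt hwpos) ht0 hw1
    calc (∑ f : X → Fin (2 ^ ℓ), w * ∑ b : Fin (2 ^ ℓ),
          |(∑ x, if f x = b then p (x, y) else 0) - ((2:ℝ) ^ ℓ)⁻¹ * ∑ x, p (x, y)|)
        = ∑ f : X → Fin (2 ^ ℓ), w *
            ∑ b : Fin (2 ^ ℓ), |∑ x, ((if f x = b then (1:ℝ) else 0) - ((2:ℝ) ^ ℓ)⁻¹) * p (x, y)| := by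
          refine Finset.sum_congr rfl fun f _ => ?_
          congr 1
          exact Finset.sum_congr rfl fun b _ => by rw [hΔ f b]
      _ ≤ ∑ f : X → Fin (2 ^ ℓ), w * (Real.sqrt ((2:ℝ) ^ ℓ) * Real.sqrt (t f)) :=
          Finset.sum_le_sum fun f _ =>
            mul_le_mul_of_nonneg_left (step1 f) (le_of_lt hwpos)
      _ = Real.sqrt ((2:ℝ) ^ ℓ) * ∑ f : X → Fin (2 ^ ℓ), w * Real.sqrt (t f) := by
          rw [Finset.mul_sum]
          exact Finset.sum_congr rfl fun f _ => by ring
      _ ≤ Real.sqrt ((2:ℝ) ^ ℓ) * Real.sqrt (∑ f : X → Fin (2 ^ ℓ), w * t f) :=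
          mul_le_mul_of_nonneg_left stepJ (Real.sqrt_nonneg _)
      _ ≤ Real.sqrt ((2:ℝ) ^ ℓ) * Real.sqrt (c y) := by
          refine mul_le_mul_of_nonneg_left (Real.sqrt_le_sqrt ?_) (Real.sqrt_nonneg _)
          rw [hexp]
          have hu0 : 0 ≤ ((2:ℝ) ^ ℓ)⁻¹ := by positivity
          have hcy : 0 ≤ ∑ x, p (x, y) ^ 2 := Finset.sum_nonneg fun x _ => sq_nonneg _
          have hceq : c y = ∑ x, p (x, y) ^ 2 := rfl
          nlinarith
  have main : (∑ f : X → Fin (2 ^ ℓ), w * hashTV p ℓ f)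
      ≤ (1/2) * (Real.sqrt ((2:ℝ) ^ ℓ) * S) := by
    have expand : (∑ f : X → Fin (2 ^ ℓ), w * hashTV p ℓ f)
        = (1/2) * ∑ y : Y, ∑ f : X → Fin (2 ^ ℓ), w * ∑ b : Fin (2 ^ ℓ),
          |(∑ x, if f x = b then p (x, y) else 0) - ((2:ℝ) ^ ℓ)⁻¹ * ∑ x, p (x, y)| := by
      unfold hashTV
      calc (∑ f : X → Fin (2 ^ ℓ), w * ((1/2) * ∑ by_ : Fin (2 ^ ℓ) × Y,
              |(∑ x, if f x = by_.1 then p (x, by_.2) else 0)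
                - ((2 ^ ℓ : ℝ))⁻¹ * ∑ x, p (x, by_.2)|))
          = (1/2) * ∑ f : X → Fin (2 ^ ℓ), w * ∑ by_ : Fin (2 ^ ℓ) × Y,
              |(∑ x, if f x = by_.1 then p (x, by_.2) else 0)
                - ((2 ^ ℓ : ℝ))⁻¹ * ∑ x, p (x, by_.2)| := by
            rw [Finset.mul_sum]
            exact Finset.sum_congr rfl fun f _ => by ring
        _ = (1/2) * ∑ f : X → Fin (2 ^ ℓ), ∑ y : Y, w * ∑ b : Fin (2 ^ ℓ),
              |(∑ x, if f x = b then p (x, y) else 0)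
                - ((2:ℝ) ^ ℓ)⁻¹ * ∑ x, p (x, y)| := by
            congr 1
            refine Finset.sum_congr rfl fun f _ => ?_
            rw [Fintype.sum_prod_type, Finset.sum_comm, Finset.mul_sum]
        _ = (1/2) * ∑ y : Y, ∑ f : X → Fin (2 ^ ℓ), w * ∑ b : Fin (2 ^ ℓ),
              |(∑ x, if f x = b then p (x, y) else 0)
                - ((2:ℝ) ^ ℓ)⁻¹ * ∑ x, p (x, y)| := by
            rw [Finset.sum_comm]
    rw [expand]
    have hle : (∑ y : Y, ∑ f : X → Fin (2 ^ ℓ), w * ∑ b : Fin (2 ^ ℓ),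
          |(∑ x, if f x = b then p (x, y) else 0) - ((2:ℝ) ^ ℓ)⁻¹ * ∑ x, p (x, y)|)
        ≤ ∑ y : Y, Real.sqrt ((2:ℝ) ^ ℓ) * Real.sqrt (c y) :=
      Finset.sum_le_sum fun y _ => key y
    calc (1/2) * ∑ y : Y, ∑ f : X → Fin (2 ^ ℓ), w * ∑ b : Fin (2 ^ ℓ),
          |(∑ x, if f x = b then p (x, y) else 0) - ((2:ℝ) ^ ℓ)⁻¹ * ∑ x, p (x, y)|
        ≤ (1/2) * ∑ y : Y, Real.sqrt ((2:ℝ) ^ ℓ) * Real.sqrt (c y) := by linarith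
      _ = (1/2) * (Real.sqrt ((2:ℝ) ^ ℓ) * S) := by
          rw [← Finset.mul_sum, ← hSdef]
  constructor
  · rw [hRHS]; exact main
  · have hne : (Finset.univ : Finset (X → Fin (2 ^ ℓ))).Nonempty := by
      have : Nonempty (Fin (2 ^ ℓ)) := ⟨⟨0, Nat.pow_pos (by norm_num)⟩⟩
      exact Finset.univ_nonempty
    have hbsum : (∑ _f : X → Fin (2 ^ ℓ), w * ((1/2) * (Real.sqrt ((2:ℝ) ^ ℓ) * S)))
        = (1/2) * (Real.sqrt ((2:ℝ) ^ ℓ) * S) := by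
      rw [← Finset.sum_mul, hw1, one_mul]
    have hsum2 : (∑ f : X → Fin (2 ^ ℓ), w * hashTV p ℓ f)
        ≤ ∑ _f : X → Fin (2 ^ ℓ), w * ((1/2) * (Real.sqrt ((2:ℝ) ^ ℓ) * S)) := by
      rw [hbsum]; exact main
    obtain ⟨f, _, hf⟩ := Finset.exists_le_of_sum_le hne hsum2
    refine ⟨f, ?_⟩
    rw [hRHS]
    exact le_of_mul_le_mul_left hf hwpos
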